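/- Let ρ₀ be a density matrix on ℂ^d, and for t ∈ [0,1] define ρ(t) := Re ρ₀ + i (1−t) Im ρ₀. Then: (i) each ρ(t) is a density matrix; (ii) ‖Im ρ(t)‖₁ = (1−t) ‖Im ρ₀‖₁ for all t ∈ [0,1], so in particular ‖Im ρ(1)‖₁ = 0; and (iii) ∫₀¹ ‖Im (d/dt ρ(t))‖₁ dt = ‖Im ρ₀‖₁ = |‖Im ρ(1)‖₁ − ‖Im ρ(0)‖₁|, i.e. the bound | ‖Im ρ_T‖₁ − ‖Im ρ_0‖₁ | ≤ ∫₀ᵀ ‖Im ρ̇_t‖₁ dt is saturated by this evolution. -/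

import Mathlib

open Matrix
open scoped ComplexOrder

noncomputable section

/-- The positive semidefinite square root, as defined in Mathlib (Dec 2024); since removed. -/
def Matrix.PosSemidef.sqrt {n : Type*} [Fintype n] [DecidableEq n] {A : Matrix n n ℂ}
    (hA : A.PosSemidef) : Matrix n n ℂ :=
  (hA.1.eigenvectorUnitary : Matrix n n ℂ) * diagonal ((↑) ∘ (√·) ∘ hA.1.eigenvalues) *
    (star (hA.1.eigenvectorUnitary : Matrix n n ℂ))

/-- A density matrix: Hermitian, positive semidefinite, trace one. -/
def IsDensityMatrix {d : ℕ} (ρ : Matrix (Fin d) (Fin d) ℂ) : Prop :=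
  ρ.IsHermitian ∧ ρ.PosSemidef ∧ ρ.trace = 1

/-- The real part `(ρ + ρᵀ)/2` of a matrix. -/
def reM {d : ℕ} (ρ : Matrix (Fin d) (Fin d) ℂ) : Matrix (Fin d) (Fin d) ℂ :=
  (2⁻¹ : ℂ) • (ρ + ρᵀ)

/-- The imaginary part `(ρ - ρᵀ)/(2i)` of a matrix. -/
def imM {d : ℕ} (ρ : Matrix (Fin d) (Fin d) ℂ) : Matrix (Fin d) (Fin d) ℂ :=
  (2 * Complex.I)⁻¹ • (ρ - ρᵀ)

/-- The Hilbert–Schmidt norm `√(tr (Aᴴ A))`. -/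
def hsNorm {d : ℕ} (A : Matrix (Fin d) (Fin d) ℂ) : ℝ :=
  Real.sqrt ((Aᴴ * A).trace.re)

/-- The trace norm `tr √(Aᴴ A)`. -/
def traceNorm {d : ℕ} (A : Matrix (Fin d) (Fin d) ℂ) : ℝ :=
  ((Matrix.posSemidef_conjTranspose_mul_self A).sqrt.trace).re

/-- Matrix logarithm via the continuous functional calculus (on Hermitian matrices). -/
def matLog {d : ℕ} (A : Matrix (Fin d) (Fin d) ℂ) : Matrix (Fin d) (Fin d) ℂ :=
  cfc Real.log A

open scoped Classical in
/-- The positive semidefinite square root of a positive semidefinite matrix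
(junk value `0` otherwise). -/
def msqrt {d : ℕ} (A : Matrix (Fin d) (Fin d) ℂ) : Matrix (Fin d) (Fin d) ℂ :=
  if h : A.PosSemidef then h.sqrt else 0

/-- The von Neumann entropy `S(ρ) = -tr(ρ log ρ)`. -/
def vnEntropy {d : ℕ} (ρ : Matrix (Fin d) (Fin d) ℂ) : ℝ :=
  -((ρ * matLog ρ).trace.re)

/-- The relative entropy of imaginarity `M_r(ρ) = S(Re ρ) - S(ρ)`. -/
def Mr {d : ℕ} (ρ : Matrix (Fin d) (Fin d) ℂ) : ℝ :=
  vnEntropy (reM ρ) - vnEntropy ρ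

/-- The root fidelity `tr √(√ρ σ √ρ)`. -/
def rootFid {d : ℕ} (ρ σ : Matrix (Fin d) (Fin d) ℂ) : ℝ :=
  ((msqrt (msqrt ρ * σ * msqrt ρ)).trace).re

/-- The geometric imaginarity `M_g(ρ) = (1 - √F(ρ, ρᵀ))/2`. -/
def Mg {d : ℕ} (ρ : Matrix (Fin d) (Fin d) ℂ) : ℝ :=
  (1 - rootFid ρ ρᵀ) / 2

/-- The Hilbert–Schmidt inner product `⟨A, B⟩ = tr(Aᴴ B)`. -/
def hsInner {d : ℕ} (A B : Matrix (Fin d) (Fin d) ℂ) : ℂ :=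
  (Aᴴ * B).trace

/-- The operator norm of a map on matrices induced by the Hilbert–Schmidt norm. -/
def opNormHS {d : ℕ} (L : Matrix (Fin d) (Fin d) ℂ → Matrix (Fin d) (Fin d) ℂ) : ℝ :=
  sSup {x : ℝ | ∃ ψ, hsNorm ψ = 1 ∧ x = hsNorm (L ψ)}

/-- The Liouville-space normalized vector `ρ̃ = ρ / ‖ρ‖_HS`. -/
def hsNormalize {d : ℕ} (A : Matrix (Fin d) (Fin d) ℂ) : Matrix (Fin d) (Fin d) ℂ :=
  ((hsNorm A : ℂ))⁻¹ • A

/-- The fluctuation `Δ𝓛 = √(‖𝓛ψ‖² - |⟨ψ, 𝓛ψ⟩|²)` of a superoperator at a unit vector. -/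
def fluct {d : ℕ} (L : Matrix (Fin d) (Fin d) ℂ → Matrix (Fin d) (Fin d) ℂ)
    (ψ : Matrix (Fin d) (Fin d) ℂ) : ℝ :=
  Real.sqrt ((hsNorm (L ψ)) ^ 2 - (‖hsInner ψ (L ψ)‖) ^ 2)

/-!
Im is ℂ-linear, vanishes on Re and satisfies Im ∘ Im = -i • Im, so Im ρ(t) = (1 - t) • Im ρ₀:
the trace norm of the imaginary part decays linearly from ‖Im ρ₀‖₁ to 0, while Im ρ̇ = -Im ρ₀
has the constant trace norm ‖Im ρ₀‖₁. Positivity holds because ρ(t) = t Re ρ₀ + (1 - t) ρ₀ is a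
convex combination of density matrices, Re ρ₀ being the midpoint of ρ₀ and ρ₀ᵀ.
-/

section PosSemidefSqrt

open scoped MatrixOrder

variable {n : Type*} [Fintype n] [DecidableEq n]

lemma Matrix.PosSemidef.sqrt_eq_cfcSqrt {A : Matrix n n ℂ} (hA : A.PosSemidef) :
    hA.sqrt = CFC.sqrt A := by
  rw [CFC.sqrt_eq_cfc, cfc_nnreal_eq_real _ A, hA.1.cfc_eq]
  simp only [Matrix.PosSemidef.sqrt, IsHermitian.cfc, Unitary.conjStarAlgAut_apply]
  congr 3
  funext i
  simp [Real.coe_sqrt, Real.coe_toNNReal', max_eq_left (hA.eigenvalues_nonneg i)]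

lemma Matrix.PosSemidef.trace_sqrt_re_nonneg {A : Matrix n n ℂ} (hA : A.PosSemidef) :
    0 ≤ hA.sqrt.trace.re := by
  rw [hA.sqrt_eq_cfcSqrt]
  exact (Complex.nonneg_iff.mp (CFC.sqrt_nonneg A).posSemidef.trace_nonneg).1

lemma sqrt_conjTranspose_smul_mul_smul (c : ℂ) (A : Matrix n n ℂ) :
    (posSemidef_conjTranspose_mul_self (c • A)).sqrt
      = (‖c‖ : ℂ) • (posSemidef_conjTranspose_mul_self A).sqrt := by
  rw [PosSemidef.sqrt_eq_cfcSqrt, PosSemidef.sqrt_eq_cfcSqrt]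
  have hsq : CFC.sqrt (Aᴴ * A) * CFC.sqrt (Aᴴ * A) = Aᴴ * A :=
    CFC.sqrt_mul_sqrt_self _ (posSemidef_conjTranspose_mul_self A).nonneg
  refine CFC.sqrt_unique ?_ ?_
  · rw [smul_mul_smul_comm, hsq, conjTranspose_smul, smul_mul_smul_comm, ← sq,
      ← Complex.conj_mul']
    rfl
  · exact ((CFC.sqrt_nonneg _).posSemidef.smul (by positivity)).nonneg

end PosSemidefSqrt

section TraceNorm

variable {d : ℕ}

lemma traceNorm_nonneg (A : Matrix (Fin d) (Fin d) ℂ) : 0 ≤ traceNorm A :=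
  (posSemidef_conjTranspose_mul_self A).trace_sqrt_re_nonneg

lemma traceNorm_smul (c : ℂ) (A : Matrix (Fin d) (Fin d) ℂ) :
    traceNorm (c • A) = ‖c‖ * traceNorm A := by
  simp only [traceNorm, sqrt_conjTranspose_smul_mul_smul, trace_smul, smul_eq_mul,
    Complex.re_ofReal_mul]

end TraceNorm

section RealImaginaryParts

variable {d : ℕ}

lemma imM_add (A B : Matrix (Fin d) (Fin d) ℂ) : imM (A + B) = imM A + imM B := by
  simp only [imM, transpose_add, add_sub_add_comm, smul_add]

lemma imM_smul (c : ℂ) (A : Matrix (Fin d) (Fin d) ℂ) : imM (c • A) = c • imM A := by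
  simp only [imM, transpose_smul, ← smul_sub, smul_comm c]

lemma imM_reM (A : Matrix (Fin d) (Fin d) ℂ) : imM (reM A) = 0 := by
  simp [imM, reM, add_comm]

lemma transpose_imM (A : Matrix (Fin d) (Fin d) ℂ) : (imM A)ᵀ = -imM A := by
  rw [imM, transpose_smul, transpose_sub, transpose_transpose, ← smul_neg, neg_sub]

lemma imM_imM (A : Matrix (Fin d) (Fin d) ℂ) : imM (imM A) = (-Complex.I) • imM A := by
  change (2 * Complex.I)⁻¹ • (imM A - (imM A)ᵀ) = _
  rw [transpose_imM, sub_neg_eq_add, ← two_smul ℂ, smul_smul]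
  congr 1
  field_simp
  simp

lemma reM_add_I_smul_imM (A : Matrix (Fin d) (Fin d) ℂ) :
    reM A + Complex.I • imM A = A := by
  have hI : Complex.I * (2 * Complex.I)⁻¹ = 2⁻¹ := by field_simp
  rw [reM, imM, smul_smul, hI, ← smul_add, add_add_sub_cancel, ← two_smul ℂ, smul_smul,
    inv_mul_cancel₀ two_ne_zero, one_smul]

lemma imM_reM_add_smul_imM (z : ℂ) (A : Matrix (Fin d) (Fin d) ℂ) :
    imM (reM A + (z * Complex.I) • imM A) = z • imM A := by
  rw [imM_add, imM_reM, imM_smul, imM_imM, smul_smul, zero_add, mul_assoc, mul_neg,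
    Complex.I_mul_I, neg_neg, mul_one]

lemma reM_add_smul_imM_eq (z : ℂ) (A : Matrix (Fin d) (Fin d) ℂ) :
    reM A + (z * Complex.I) • imM A = (1 - z) • reM A + z • A := by
  calc reM A + (z * Complex.I) • imM A
        = (1 - z) • reM A + z • (reM A + Complex.I • imM A) := by module
    _ = (1 - z) • reM A + z • A := by rw [reM_add_I_smul_imM]

end RealImaginaryParts

namespace IsDensityMatrix

variable {d : ℕ} {ρ σ : Matrix (Fin d) (Fin d) ℂ}

lemma transpose (hρ : IsDensityMatrix ρ) : IsDensityMatrix ρᵀ :=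
  ⟨hρ.1.transpose, hρ.2.1.transpose, by rw [trace_transpose, hρ.2.2]⟩

lemma smul_add_smul (hρ : IsDensityMatrix ρ) (hσ : IsDensityMatrix σ) {a b : ℝ} (ha : 0 ≤ a)
    (hb : 0 ≤ b) (hab : a + b = 1) : IsDensityMatrix ((a : ℂ) • ρ + (b : ℂ) • σ) := by
  have hpsd : ((a : ℂ) • ρ + (b : ℂ) • σ).PosSemidef :=
    (hρ.2.1.smul (by exact_mod_cast ha)).add (hσ.2.1.smul (by exact_mod_cast hb))
  refine ⟨hpsd.1, hpsd, ?_⟩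
  rw [trace_add, trace_smul, trace_smul, hρ.2.2, hσ.2.2, smul_eq_mul, smul_eq_mul, mul_one,
    mul_one, ← Complex.ofReal_add, hab, Complex.ofReal_one]

lemma reM (hρ : IsDensityMatrix ρ) : IsDensityMatrix (_root_.reM ρ) := by
  have h := hρ.smul_add_smul hρ.transpose (a := 2⁻¹) (b := 2⁻¹) (by norm_num) (by norm_num)
    (by norm_num)
  rwa [Complex.ofReal_inv, Complex.ofReal_ofNat, ← smul_add] at h

lemma reM_add_smul_imM (hρ : IsDensityMatrix ρ) {t : ℝ} (ht : t ∈ Set.Icc (0 : ℝ) 1) :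
    IsDensityMatrix (_root_.reM ρ + (((1 - t : ℝ) : ℂ) * Complex.I) • imM ρ) := by
  have h := hρ.reM.smul_add_smul hρ ht.1 (sub_nonneg.mpr ht.2) (add_sub_cancel t 1)
  rw [Complex.ofReal_sub, Complex.ofReal_one] at h
  rwa [reM_add_smul_imM_eq, Complex.ofReal_sub, Complex.ofReal_one, sub_sub_cancel]

end IsDensityMatrix

lemma hasDerivAt_reM_add_smul_imM_apply {d : ℕ} (A : Matrix (Fin d) (Fin d) ℂ) (i j : Fin d)
    (t : ℝ) :
    HasDerivAt (fun s : ℝ => (reM A + (((1 - s : ℝ) : ℂ) * Complex.I) • imM A) i j)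
      (((-Complex.I) • imM A) i j) t := by
  have hlin : HasDerivAt (fun s : ℝ => ((1 - s : ℝ) : ℂ)) (-1) t := by
    simpa using ((hasDerivAt_id t).const_sub 1).ofReal_comp
  have hfun : (fun s : ℝ => (reM A + (((1 - s : ℝ) : ℂ) * Complex.I) • imM A) i j)
      = fun s : ℝ => reM A i j + ((1 - s : ℝ) : ℂ) * (Complex.I * imM A i j) := by
    funext s
    rw [Matrix.add_apply, Matrix.smul_apply, smul_eq_mul, mul_assoc]
  rw [hfun]
  refine ((hlin.mul_const _).const_add _).congr_deriv ?_
  rw [Matrix.smul_apply, smul_eq_mul]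
  ring

theorem geodesic_dephasing_saturates {d : ℕ} (ρ₀ : Matrix (Fin d) (Fin d) ℂ)
    (hρ₀ : IsDensityMatrix ρ₀)
    (ρfam : ℝ → Matrix (Fin d) (Fin d) ℂ)
    (hfam : ∀ t, ρfam t = reM ρ₀ + (((1 - t : ℝ) : ℂ) * Complex.I) • imM ρ₀) :
    (∀ t ∈ Set.Icc (0:ℝ) 1, IsDensityMatrix (ρfam t)) ∧
    (∀ t ∈ Set.Icc (0:ℝ) 1,
      traceNorm (imM (ρfam t)) = (1 - t) * traceNorm (imM ρ₀)) ∧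
    traceNorm (imM (ρfam 1)) = 0 ∧
    (∀ t : ℝ, ∀ i j, HasDerivAt (fun s => ρfam s i j)
      (((-Complex.I) • imM ρ₀ : Matrix (Fin d) (Fin d) ℂ) i j) t) ∧
    (∫ _t in (0:ℝ)..1, traceNorm (imM ((-Complex.I) • imM ρ₀ : Matrix (Fin d) (Fin d) ℂ)))
      = traceNorm (imM ρ₀) ∧
    traceNorm (imM ρ₀) = |traceNorm (imM (ρfam 1)) - traceNorm (imM (ρfam 0))| := by
  have htraceNorm : ∀ t ∈ Set.Icc (0:ℝ) 1,
      traceNorm (imM (ρfam t)) = (1 - t) * traceNorm (imM ρ₀) := fun t ht => by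
    rw [hfam, imM_reM_add_smul_imM, traceNorm_smul, Complex.norm_real,
      Real.norm_of_nonneg (sub_nonneg.mpr ht.2)]
  have h₁ := htraceNorm 1 (Set.right_mem_Icc.mpr zero_le_one)
  have h₀ := htraceNorm 0 (Set.left_mem_Icc.mpr zero_le_one)
  rw [sub_self, zero_mul] at h₁
  rw [sub_zero, one_mul] at h₀
  refine ⟨fun t ht => hfam t ▸ hρ₀.reM_add_smul_imM ht, htraceNorm, h₁,
    fun t i j => ?_, ?_, ?_⟩
  · simp only [hfam]
    exact hasDerivAt_reM_add_smul_imM_apply ρ₀ i j t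
  · rw [intervalIntegral.integral_const, imM_smul, imM_imM, traceNorm_smul, traceNorm_smul]
    simp
  · rw [h₁, h₀, zero_sub, abs_neg, abs_of_nonneg (traceNorm_nonneg _)]
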